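/- Let H be a Hopf algebra with coproduct Δ, ρ : H → S ⊗ H a coaction with cointeraction m^{1,3}(ρ ⊗ ρ)Δ = (id ⊗ Δ)ρ, S a commutative bialgebra, and let ℓ be a character of S with M_ℓ = (ℓ ⊗ id)ρ. Suppose (X_{st}) are characters of H with Chen's identity. Then for all x, y, t: (X_{yx} ∘ M_ℓ) ∗ (X_{xt} ∘ M_ℓ) = X_{yt} ∘ M_ℓ, i.e. the translated/renormalised family again satisfies Chen's identity. -/

import Mathlib

set_option autoImplicit false

open TensorProduct

/-- Convolution of linear functionals on a coalgebra: `(f ∗ g)(x) = (f ⊗ g)(Δ x)`. -/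
noncomputable def convF (k H : Type*) [CommRing k] [AddCommGroup H] [Module k H]
    [Coalgebra k H] (f g : H →ₗ[k] k) : H →ₗ[k] k :=
  TensorProduct.lift (((LinearMap.mul k k).comp f).compl₂ g) ∘ₗ
    Coalgebra.comul (R := k) (A := H)

/-- `Γ_g = (g ⊗ id) ∘ Δ` for a linear functional `g` on a coalgebra. -/
noncomputable def GammaF (k H : Type*) [CommRing k] [AddCommGroup H] [Module k H]
    [Coalgebra k H] (g : H →ₗ[k] k) : H →ₗ[k] H :=
  (TensorProduct.lid k H).toLinearMap ∘ₗ TensorProduct.map g LinearMap.id ∘ₗ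
    Coalgebra.comul (R := k) (A := H)

/-- `M_ℓ = (ℓ ⊗ id) ∘ ρ`, the renormalisation map attached to a coaction `ρ` and a
character `ℓ`. -/
noncomputable def Ml (k H S : Type*) [CommRing k] [AddCommGroup H] [Module k H]
    [CommRing S] [Algebra k S] (ρ : H →ₗ[k] S ⊗[k] H) (ℓ : S →ₐ[k] k) : H →ₗ[k] H :=
  (TensorProduct.lid k H).toLinearMap ∘ₗ TensorProduct.map ℓ.toLinearMap LinearMap.id ∘ₗ ρ

/-! The renormalised family is a family of linear functionals precomposed with `M_ℓ`, so
Chen's identity transfers as soon as `M_ℓ` is a coalgebra morphism: then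
`(f ∘ M_ℓ) ∗ (g ∘ M_ℓ) = (f ∗ g) ∘ M_ℓ`. That `M_ℓ` commutes with the coproducts follows from
the cointeraction identity, because applying `ℓ ⊗ id` turns the multiplication `m^{1,3}` of the
`S`-legs into the product of two evaluations of `ℓ`, which is where `ℓ` being a character is used. -/

theorem convF_comp_of_comul_comp {k C D : Type*} [CommRing k] [AddCommGroup C] [Module k C]
    [Coalgebra k C] [AddCommGroup D] [Module k D] [Coalgebra k D] {φ : C →ₗ[k] D}
    (hφ : Coalgebra.comul ∘ₗ φ = map φ φ ∘ₗ Coalgebra.comul)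
    (f g : D →ₗ[k] k) :
    convF k C (f ∘ₗ φ) (g ∘ₗ φ) = convF k D f g ∘ₗ φ := by
  rw [convF, convF, LinearMap.comp_assoc, hφ]
  conv_rhs => rw [← LinearMap.comp_assoc, lift_comp_map]
  rfl

section Evaluation

variable {k S M N : Type*} [CommRing k] [AddCommGroup M] [Module k M] [AddCommGroup N] [Module k N]

theorem lid_comp_map_comp_map_id [AddCommGroup S] [Module k S] (ℓ : S →ₗ[k] k) (f : M →ₗ[k] N) :
    (TensorProduct.lid k N).toLinearMap ∘ₗ map ℓ LinearMap.id ∘ₗ map LinearMap.id f =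
      f ∘ₗ (TensorProduct.lid k M).toLinearMap ∘ₗ map ℓ LinearMap.id := by
  ext s m
  simp

theorem lid_comp_map_comp_mul'_tensorTensorTensorComm [CommRing S] [Algebra k S]
    (ℓ : S →ₐ[k] k) :
    (TensorProduct.lid k (M ⊗[k] N)).toLinearMap ∘ₗ map ℓ.toLinearMap LinearMap.id ∘ₗ
        map (LinearMap.mul' k S) LinearMap.id ∘ₗ
        (tensorTensorTensorComm k S M S N).toLinearMap =
      map ((TensorProduct.lid k M).toLinearMap ∘ₗ map ℓ.toLinearMap LinearMap.id)
          ((TensorProduct.lid k N).toLinearMap ∘ₗ map ℓ.toLinearMap LinearMap.id) := by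
  ext s m u n
  simp [mul_comm (ℓ s), mul_smul, smul_tmul']

end Evaluation

theorem comul_comp_Ml {k H S : Type*} [CommRing k] [AddCommGroup H] [Module k H]
    [Coalgebra k H] [CommRing S] [Algebra k S] {ρ : H →ₗ[k] S ⊗[k] H}
    (hcointer : map (LinearMap.mul' k S) LinearMap.id ∘ₗ
        (tensorTensorTensorComm k S H S H).toLinearMap ∘ₗ map ρ ρ ∘ₗ Coalgebra.comul =
      map LinearMap.id Coalgebra.comul ∘ₗ ρ)
    (ℓ : S →ₐ[k] k) :
    Coalgebra.comul ∘ₗ Ml k H S ρ ℓ =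
      map (Ml k H S ρ ℓ) (Ml k H S ρ ℓ) ∘ₗ Coalgebra.comul := by
  calc Coalgebra.comul ∘ₗ Ml k H S ρ ℓ
      = (TensorProduct.lid k (H ⊗[k] H)).toLinearMap ∘ₗ map ℓ.toLinearMap LinearMap.id ∘ₗ
          map LinearMap.id Coalgebra.comul ∘ₗ ρ := by
        simpa only [Ml, LinearMap.comp_assoc] using
          congrArg (· ∘ₗ ρ) (lid_comp_map_comp_map_id ℓ.toLinearMap Coalgebra.comul).symm
    _ = map (Ml k H S ρ ℓ) (Ml k H S ρ ℓ) ∘ₗ Coalgebra.comul := by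
        rw [← hcointer]
        simpa only [Ml, map_comp, LinearMap.comp_assoc] using
          congrArg (· ∘ₗ map ρ ρ ∘ₗ Coalgebra.comul)
            (lid_comp_map_comp_mul'_tensorTensorTensorComm (M := H) (N := H) ℓ)

theorem stmt_17_general (k H S : Type*) [CommRing k] [Ring H] [Bialgebra k H]
    [CommRing S] [Bialgebra k S]
    (ρ : H →ₗ[k] S ⊗[k] H)
    (hcointer : ∀ x : H,
      (TensorProduct.map (LinearMap.mul' k S) LinearMap.id)
        ((TensorProduct.tensorTensorTensorComm k S H S H)
          ((TensorProduct.map ρ ρ) (Coalgebra.comul (R := k) x)))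
      = (TensorProduct.map LinearMap.id (Coalgebra.comul (R := k) (A := H))) (ρ x))
    (ℓ : S →ₐ[k] k)
    (X : ℝ → ℝ → (H →ₐ[k] k))
    (chen : ∀ s u t : ℝ,
      convF k H (X s u).toLinearMap (X u t).toLinearMap = (X s t).toLinearMap) :
    ∀ x y t : ℝ,
      convF k H ((X y x).toLinearMap ∘ₗ Ml k H S ρ ℓ)
          ((X x t).toLinearMap ∘ₗ Ml k H S ρ ℓ)
        = (X y t).toLinearMap ∘ₗ Ml k H S ρ ℓ := by
  intro x y t
  rw [convF_comp_of_comul_comp (comul_comp_Ml (LinearMap.ext hcointer) ℓ), chen]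

/-- The translated/renormalised family `X_{st} ∘ M_ℓ` again satisfies Chen's identity:
`(X_{yx} ∘ M_ℓ) ∗ (X_{xt} ∘ M_ℓ) = X_{yt} ∘ M_ℓ`. -/
theorem stmt_17 (k H S : Type*) [CommRing k] [Ring H] [Bialgebra k H] [HopfAlgebra k H]
    [CommRing S] [Bialgebra k S]
    (ρ : H →ₗ[k] S ⊗[k] H)
    (hcoassoc : ∀ x : H, (TensorProduct.assoc k S S H)
        ((TensorProduct.map (Coalgebra.comul (R := k) (A := S)) LinearMap.id) (ρ x))
      = (TensorProduct.map LinearMap.id ρ) (ρ x))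
    (hcounit : ∀ x : H, (TensorProduct.lid k H)
        ((TensorProduct.map (Coalgebra.counit (R := k) (A := S)) LinearMap.id) (ρ x)) = x)
    (hcointer : ∀ x : H,
      (TensorProduct.map (LinearMap.mul' k S) LinearMap.id)
        ((TensorProduct.tensorTensorTensorComm k S H S H)
          ((TensorProduct.map ρ ρ) (Coalgebra.comul (R := k) x)))
      = (TensorProduct.map LinearMap.id (Coalgebra.comul (R := k) (A := H))) (ρ x))
    (ℓ : S →ₐ[k] k)
    (X : ℝ → ℝ → (H →ₐ[k] k))
    (chen : ∀ s u t : ℝ,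
      convF k H (X s u).toLinearMap (X u t).toLinearMap = (X s t).toLinearMap) :
    ∀ x y t : ℝ,
      convF k H ((X y x).toLinearMap ∘ₗ Ml k H S ρ ℓ)
          ((X x t).toLinearMap ∘ₗ Ml k H S ρ ℓ)
        = (X y t).toLinearMap ∘ₗ Ml k H S ρ ℓ :=
  stmt_17_general k H S ρ hcointer ℓ X chen
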